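/- arXiv:2408.01940 — 2 statements merged into one kernel-verified Lean document; each statement's English description precedes it below -/
import Mathlib

section
/- Let E be a complex inner product space and let ψ ∈ E be a unit vector. Let Q_1,…,Q_m and R_1,…,R_k be orthogonal projections on E such that all of the operators Q_1,…,Q_m,R_1,…,R_k pairwise commute. Set δ = Σ_{i=1}^m √(1 − re⟨ψ, Q_i ψ⟩) + Σ_{j=1}^k √(re⟨ψ, R_j ψ⟩). If δ < 1, then there exists a unit vector ψ̃ ∈ E with Q_i ψ̃ = ψ̃ for all i, R_j ψ̃ = 0 for all j, and |⟨ψ, ψ̃⟩| ≥ 1 − δ. -/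
/-- An orthogonal projection on a complex inner ℂ product space: a continuous linear map
that is idempotent and self-adjoint (with respect to the inner ℂ product). -/
def IsOrthogonalProjection {E : Type*} [NormedAddCommGroup E] [InnerProductSpace ℂ E]
    (P : E →L[ℂ] E) : Prop :=
  P.comp P = P ∧ ∀ x y : E, (inner ℂ (P x) y : ℂ) = inner ℂ x (P y)

section Aux

variable {E : Type*} [NormedAddCommGroup E] [InnerProductSpace ℂ E]

lemma IsOrthogonalProjection.idem {P : E →L[ℂ] E} (hP : IsOrthogonalProjection P) (x : E) :
    P (P x) = P x := by
  have := congrFun (congrArg DFunLike.coe hP.1) x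
  simpa using this

lemma IsOrthogonalProjection.norm_sq {P : E →L[ℂ] E} (hP : IsOrthogonalProjection P) (x : E) :
    ‖P x‖ ^ 2 = (inner ℂ x (P x) : ℂ).re := by
  have h1 : (inner ℂ (P x) (P x) : ℂ) = inner ℂ x (P x) := by
    rw [hP.2 x (P x), hP.idem x]
  have h2 : (inner ℂ (P x) (P x) : ℂ).re = ‖P x‖ ^ 2 := by
    rw [← RCLike.re_to_complex]; exact inner_self_eq_norm_sq (P x)
  rw [← h1, h2]

lemma IsOrthogonalProjection.norm_le {P : E →L[ℂ] E} (hP : IsOrthogonalProjection P) (x : E) :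
    ‖P x‖ ≤ ‖x‖ := by
  have h := hP.norm_sq x
  have hcs : (inner ℂ x (P x) : ℂ).re ≤ ‖x‖ * ‖P x‖ := by
    rw [← RCLike.re_to_complex]; exact re_inner_le_norm x (P x)
  nlinarith [norm_nonneg (P x), norm_nonneg x]

lemma IsOrthogonalProjection.one_sub {P : E →L[ℂ] E} (hP : IsOrthogonalProjection P) :
    IsOrthogonalProjection (1 - P) := by
  constructor
  · ext x
    simp [ContinuousLinearMap.comp_apply, hP.idem x, sub_sub_cancel]
  · intro x y
    simp only [ContinuousLinearMap.sub_apply, ContinuousLinearMap.one_apply,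
      inner_sub_left, inner_sub_right, hP.2]

/-- Key construction: a joint "product" projection-like contraction for a finite family of
pairwise commuting orthogonal projections. -/
lemma exists_joint_contraction {ι : Type*} [DecidableEq ι] (P : ι → E →L[ℂ] E)
    (hP : ∀ i, IsOrthogonalProjection (P i))
    (hcomm : ∀ i j, (P i).comp (P j) = (P j).comp (P i)) (s : Finset ι) :
    ∃ T : E →L[ℂ] E, (∀ x, ‖T x‖ ≤ ‖x‖) ∧ (∀ i ∈ s, (P i).comp T = T) ∧
      (∀ S : E →L[ℂ] E, (∀ i ∈ s, S.comp (P i) = (P i).comp S) → S.comp T = T.comp S) ∧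
      (∀ ψ : E, ‖ψ - T ψ‖ ≤ ∑ i ∈ s, ‖ψ - P i ψ‖) := by
  induction s using Finset.induction_on with
  | empty =>
    exact ⟨ContinuousLinearMap.id ℂ E, fun x => le_refl _, by simp, by
      intro S _
      simp [ContinuousLinearMap.comp_id, ContinuousLinearMap.id_comp], by simp⟩
  | @insert a s ha ih =>
    obtain ⟨T, hT1, hT2, hT3, hT4⟩ := ih
    have hcT : (P a).comp T = T.comp (P a) :=
      hT3 (P a) (fun i _ => hcomm a i)
    refine ⟨T.comp (P a), ?_, ?_, ?_, ?_⟩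
    · intro x
      exact le_trans (hT1 ((P a) x)) ((hP a).norm_le x)
    · intro i hi
      rcases Finset.mem_insert.1 hi with rfl | hi
      · calc (P i).comp (T.comp (P i)) = ((P i).comp T).comp (P i) := by
              rw [ContinuousLinearMap.comp_assoc]
          _ = (T.comp (P i)).comp (P i) := by rw [hcT]
          _ = T.comp ((P i).comp (P i)) := by rw [ContinuousLinearMap.comp_assoc]
          _ = T.comp (P i) := by rw [(hP i).1]
      · calc (P i).comp (T.comp (P a)) = ((P i).comp T).comp (P a) := by
              rw [ContinuousLinearMap.comp_assoc]
          _ = T.comp (P a) := by rw [hT2 i hi]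
    · intro S hS
      have h1 : S.comp T = T.comp S := hT3 S (fun i hi => hS i (Finset.mem_insert_of_mem hi))
      have h2 : S.comp (P a) = (P a).comp S := hS a (Finset.mem_insert_self a s)
      calc S.comp (T.comp (P a)) = (S.comp T).comp (P a) := by
            rw [ContinuousLinearMap.comp_assoc]
        _ = (T.comp S).comp (P a) := by rw [h1]
        _ = T.comp (S.comp (P a)) := by rw [ContinuousLinearMap.comp_assoc]
        _ = T.comp ((P a).comp S) := by rw [h2]
        _ = (T.comp (P a)).comp S := by rw [ContinuousLinearMap.comp_assoc]
    · intro ψ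
      have step1 : ‖ψ - T ((P a) ψ)‖ ≤ ‖ψ - (P a) ψ‖ + ‖(P a) ψ - T ((P a) ψ)‖ := by
        calc ‖ψ - T ((P a) ψ)‖ = ‖(ψ - (P a) ψ) + ((P a) ψ - T ((P a) ψ))‖ := by
              rw [sub_add_sub_cancel]
          _ ≤ ‖ψ - (P a) ψ‖ + ‖(P a) ψ - T ((P a) ψ)‖ := norm_add_le _ _
      have step2 : ‖(P a) ψ - T ((P a) ψ)‖ ≤ ∑ i ∈ s, ‖(P a) ψ - P i ((P a) ψ)‖ := hT4 _
      have step3 : ∀ i ∈ s, ‖(P a) ψ - P i ((P a) ψ)‖ ≤ ‖ψ - P i ψ‖ := by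
        intro i _
        have hci : P i ((P a) ψ) = (P a) (P i ψ) := by
          have := congrFun (congrArg DFunLike.coe (hcomm i a)) ψ
          simpa using this
        have : (P a) ψ - P i ((P a) ψ) = (P a) (ψ - P i ψ) := by
          rw [hci, map_sub]
        rw [this]
        exact (hP a).norm_le _
      calc ‖ψ - (T.comp (P a)) ψ‖ = ‖ψ - T ((P a) ψ)‖ := rfl
        _ ≤ ‖ψ - (P a) ψ‖ + ‖(P a) ψ - T ((P a) ψ)‖ := step1
        _ ≤ ‖ψ - (P a) ψ‖ + ∑ i ∈ s, ‖(P a) ψ - P i ((P a) ψ)‖ := by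
            exact add_le_add le_rfl step2
        _ ≤ ‖ψ - (P a) ψ‖ + ∑ i ∈ s, ‖ψ - P i ψ‖ := by
            exact add_le_add le_rfl (Finset.sum_le_sum step3)
        _ = ∑ i ∈ insert a s, ‖ψ - P i ψ‖ := by rw [Finset.sum_insert ha]

end Aux

/-- excitation projection lemma: given a unit vector `ψ` and pairwise commuting
orthogonal projections `Q 1, …, Q m, R 1, …, R k`, with
`δ = Σᵢ √(1 − re⟨ψ, Qᵢ ψ⟩) + Σⱼ √(re⟨ψ, Rⱼ ψ⟩) < 1`, there is a unit vector `ψt` fixed by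
all `Q i`, annihilated by all `R j`, with `|⟨ψ, ψt⟩| ≥ 1 − δ`. -/
theorem exists_state_in_joint_range_kernel
    {E : Type*} [NormedAddCommGroup E] [InnerProductSpace ℂ E]
    {m k : ℕ} (Q : Fin m → E →L[ℂ] E) (R : Fin k → E →L[ℂ] E)
    (hQ : ∀ i, IsOrthogonalProjection (Q i))
    (hR : ∀ j, IsOrthogonalProjection (R j))
    (hQQ : ∀ i j, (Q i).comp (Q j) = (Q j).comp (Q i))
    (hRR : ∀ i j, (R i).comp (R j) = (R j).comp (R i))
    (hQR : ∀ i j, (Q i).comp (R j) = (R j).comp (Q i))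
    (ψ : E) (hψ : ‖ψ‖ = 1)
    (δ : ℝ)
    (hδdef : δ = ∑ i, Real.sqrt (1 - (inner ℂ ψ (Q i ψ) : ℂ).re)
        + ∑ j, Real.sqrt ((inner ℂ ψ (R j ψ) : ℂ).re))
    (hδ : δ < 1) :
    ∃ ψt : E, ‖ψt‖ = 1 ∧ (∀ i, Q i ψt = ψt) ∧ (∀ j, R j ψt = 0) ∧
      1 - δ ≤ ‖(inner ℂ ψ ψt : ℂ)‖ := by
  classical
  -- the combined family of projections
  set P : Fin m ⊕ Fin k → E →L[ℂ] E := Sum.elim Q (fun j => 1 - R j) with hPdef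
  have hP : ∀ i, IsOrthogonalProjection (P i) := by
    rintro (i | j)
    · exact hQ i
    · exact (hR j).one_sub
  have hcomm : ∀ i j, (P i).comp (P j) = (P j).comp (P i) := by
    have key : ∀ (A B : E →L[ℂ] E), A.comp B = B.comp A →
        A.comp (1 - B) = (1 - B).comp A := by
      intro A B h
      ext x
      have hx : A (B x) = B (A x) := by
        simpa using congrFun (congrArg DFunLike.coe h) x
      simp [ContinuousLinearMap.comp_apply, ContinuousLinearMap.sub_apply,
        ContinuousLinearMap.one_apply, map_sub, hx]
    rintro (i | j) (i' | j')
    · exact hQQ i i'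
    · exact key _ _ (hQR i j')
    · exact (key _ _ (hQR i' j)).symm
    · show (1 - R j).comp (1 - R j') = (1 - R j').comp (1 - R j)
      have h1 : (R j).comp (1 - R j') = (1 - R j').comp (R j) := key _ _ (hRR j j')
      exact (key (1 - R j') (R j) h1.symm).symm
  obtain ⟨T, hT1, hT2, _, hT4⟩ := exists_joint_contraction P hP hcomm Finset.univ
  set φ : E := T ψ with hφdef
  have happly : ∀ i, P i φ = φ := by
    intro i
    have := congrFun (congrArg DFunLike.coe (hT2 i (Finset.mem_univ i))) ψ
    simpa using this
  have hfix : ∀ i, Q i φ = φ := fun i => happly (Sum.inl i)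
  have hann : ∀ j, R j φ = 0 := by
    intro j
    have h := happly (Sum.inr j)
    simp only [hPdef, Sum.elim_inr, ContinuousLinearMap.sub_apply,
      ContinuousLinearMap.one_apply] at h
    -- h : φ - R j φ = φ
    have := sub_eq_self.mp h
    exact this
  -- norm computations for the individual terms
  have hQnorm : ∀ i, ‖ψ - Q i ψ‖ = Real.sqrt (1 - (inner ℂ ψ (Q i ψ) : ℂ).re) := by
    intro i
    have h1 : ‖(1 - Q i) ψ‖ ^ 2 = (inner ℂ ψ ((1 - Q i) ψ) : ℂ).re := (hQ i).one_sub.norm_sq ψ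
    have h2 : (inner ℂ ψ ((1 - Q i) ψ) : ℂ).re = 1 - (inner ℂ ψ (Q i ψ) : ℂ).re := by
      have hself : (inner ℂ ψ ψ : ℂ).re = 1 := by
        rw [← RCLike.re_to_complex, inner_self_eq_norm_sq, hψ]; norm_num
      simp only [ContinuousLinearMap.sub_apply, ContinuousLinearMap.one_apply,
        inner_sub_right, Complex.sub_re, hself]
    have h3 : (1 - Q i) ψ = ψ - Q i ψ := by
      simp [ContinuousLinearMap.sub_apply]
    rw [← h3, ← h2, ← h1, Real.sqrt_sq (norm_nonneg _)]
  have hRnorm : ∀ j, ‖R j ψ‖ = Real.sqrt ((inner ℂ ψ (R j ψ) : ℂ).re) := by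
    intro j
    rw [← (hR j).norm_sq ψ, Real.sqrt_sq (norm_nonneg _)]
  -- the key estimate: ‖ψ - φ‖ ≤ δ
  have hest : ‖ψ - φ‖ ≤ δ := by
    have := hT4 ψ
    rw [Fintype.sum_sum_type] at this
    have hterm : ∀ j : Fin k, ‖ψ - P (Sum.inr j) ψ‖ = ‖R j ψ‖ := by
      intro j
      simp only [hPdef, Sum.elim_inr, ContinuousLinearMap.sub_apply,
        ContinuousLinearMap.one_apply, sub_sub_cancel]
    calc ‖ψ - φ‖ ≤ (∑ i, ‖ψ - P (Sum.inl i) ψ‖) + ∑ j, ‖ψ - P (Sum.inr j) ψ‖ := this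
      _ = (∑ i, ‖ψ - Q i ψ‖) + ∑ j, ‖R j ψ‖ := by
          have h1 : ∀ i : Fin m, ‖ψ - P (Sum.inl i) ψ‖ = ‖ψ - Q i ψ‖ := fun i => rfl
          rw [Finset.sum_congr rfl fun j _ => hterm j,
            Finset.sum_congr rfl fun i _ => h1 i]
      _ = δ := by
          rw [hδdef]
          congr 1
          · exact Finset.sum_congr rfl (fun i _ => hQnorm i)
          · exact Finset.sum_congr rfl (fun j _ => hRnorm j)
  have hφle : ‖φ‖ ≤ 1 := by
    have := hT1 ψ
    rwa [hψ] at this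
  have hφpos : 0 < ‖φ‖ := by
    have h1 : ‖ψ‖ - ‖φ‖ ≤ ‖ψ - φ‖ := norm_sub_norm_le ψ φ
    rw [hψ] at h1
    linarith
  -- the normalized vector
  refine ⟨((‖φ‖ : ℂ))⁻¹ • φ, ?_, ?_, ?_, ?_⟩
  · rw [norm_smul]
    simp [norm_inv, Complex.norm_real, abs_of_pos hφpos]
    field_simp
  · intro i
    rw [map_smul, hfix]
  · intro j
    rw [map_smul, hann, smul_zero]
  · -- the overlap bound
    have hre : 1 - δ ≤ (inner ℂ ψ φ : ℂ).re := by
      have h1 : (inner ℂ ψ φ : ℂ) = inner ℂ ψ ψ - inner ℂ ψ (ψ - φ) := by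
        rw [inner_sub_right]; ring
      have hself : (inner ℂ ψ ψ : ℂ).re = 1 := by
        rw [← RCLike.re_to_complex, inner_self_eq_norm_sq, hψ]; norm_num
      have h2 : (inner ℂ ψ (ψ - φ) : ℂ).re ≤ ‖ψ - φ‖ := by
        calc (inner ℂ ψ (ψ - φ) : ℂ).re ≤ ‖(inner ℂ ψ (ψ - φ) : ℂ)‖ := Complex.re_le_norm _
          _ = ‖(inner ℂ ψ (ψ - φ) : ℂ)‖ := rfl
          _ ≤ ‖ψ‖ * ‖ψ - φ‖ := norm_inner_le_norm ψ (ψ - φ)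
          _ = ‖ψ - φ‖ := by rw [hψ, one_mul]
      have : (inner ℂ ψ φ : ℂ).re = 1 - (inner ℂ ψ (ψ - φ) : ℂ).re := by
        rw [h1, Complex.sub_re, hself]
      linarith
    have habs : ‖(inner ℂ ψ φ : ℂ)‖ ≥ 1 - δ :=
      le_trans hre (Complex.re_le_norm _)
    have hinner : (inner ℂ ψ (((‖φ‖ : ℂ))⁻¹ • φ) : ℂ) = ((‖φ‖ : ℂ))⁻¹ * inner ℂ ψ φ := by
      rw [inner_smul_right]
    rw [hinner, norm_mul]
    have habsinv : ‖((‖φ‖ : ℂ))⁻¹‖ = ‖φ‖⁻¹ := by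
      rw [norm_inv, Complex.norm_real, norm_norm]
    rw [habsinv]
    have h1le : (1 : ℝ) ≤ ‖φ‖⁻¹ := (one_le_inv₀ hφpos).2 hφle
    calc 1 - δ ≤ ‖(inner ℂ ψ φ : ℂ)‖ := habs
      _ = 1 * ‖(inner ℂ ψ φ : ℂ)‖ := (one_mul _).symm
      _ ≤ ‖φ‖⁻¹ * ‖(inner ℂ ψ φ : ℂ)‖ :=
          mul_le_mul_of_nonneg_right h1le (norm_nonneg _)
end

section
/- Let ι and κ be finite types, let H be a Hermitian matrix indexed by ι×κ with smallest eigenvalue λ_min and largest eigenvalue λ_max, and let ψ_C : κ → ℂ be a unit vector. Define H_A indexed by ι by (H_A)_{pq} = Σ_{k,l} conj(ψ_C(k)) · H_{(p,k),(q,l)} · ψ_C(l). Then for every unit vector φ : ι → ℂ, λ_min ≤ re⟨φ, H_A φ⟩ ≤ λ_max. In particular every eigenvalue of the Hermitian matrix H_A lies in the interval [λ_min, λ_max], and the ground-state energy of the embedded Hamiltonian H_A is an upper bound on the ground-state energy of H. -/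
open scoped Matrix

lemma rayleigh_aux {n : Type*} [Fintype n] [DecidableEq n]
    (A : Matrix n n ℂ) (hA : A.IsHermitian) (lamMin lamMax : ℝ)
    (hmin : IsLeast (Set.range hA.eigenvalues) lamMin)
    (hmax : IsGreatest (Set.range hA.eigenvalues) lamMax)
    (x : n → ℂ) (hx : star x ⬝ᵥ x = 1) :
    lamMin ≤ (star x ⬝ᵥ A *ᵥ x).re ∧ (star x ⬝ᵥ A *ᵥ x).re ≤ lamMax := by
  set U : Matrix n n ℂ := (hA.eigenvectorUnitary : Matrix n n ℂ) with hU
  set c : n → ℂ := star U *ᵥ x with hc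
  have hstarc : star c = star x ᵥ* U := by
    rw [hc, Matrix.star_mulVec, Matrix.star_eq_conjTranspose, Matrix.conjTranspose_conjTranspose]
  have key : star x ⬝ᵥ A *ᵥ x = ∑ j, (hA.eigenvalues j : ℂ) * Complex.normSq (c j) := by
    conv_lhs => rw [hA.spectral_theorem, Unitary.conjStarAlgAut_apply]
    rw [← Matrix.mulVec_mulVec, ← Matrix.mulVec_mulVec, Matrix.dotProduct_mulVec, ← hstarc, ← hc]
    simp only [Matrix.mulVec_diagonal, dotProduct, Pi.star_apply, Function.comp_apply]
    refine Finset.sum_congr rfl fun j _ => ?_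
    simp only [Complex.normSq_eq_conj_mul_self, Complex.star_def]
    rw [mul_left_comm]; rfl
  have hnorm : ∑ j, Complex.normSq (c j) = 1 := by
    have h1 : star c ⬝ᵥ c = 1 := by
      rw [hstarc, hc, ← Matrix.dotProduct_mulVec, Matrix.mulVec_mulVec,
        (Matrix.mem_unitaryGroup_iff).mp (hA.eigenvectorUnitary).2, Matrix.one_mulVec, hx]
    have h2 : star c ⬝ᵥ c = ((∑ j, Complex.normSq (c j) : ℝ) : ℂ) := by
      simp only [dotProduct, Pi.star_apply]
      push_cast
      refine Finset.sum_congr rfl fun j _ => ?_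
      simp [Complex.normSq_eq_conj_mul_self, Complex.star_def]
    rw [h2] at h1
    exact_mod_cast h1
  have hre : (star x ⬝ᵥ A *ᵥ x).re = ∑ j, hA.eigenvalues j * Complex.normSq (c j) := by
    rw [key, Complex.re_sum]; simp
  rw [hre]
  constructor
  · calc lamMin = ∑ j, lamMin * Complex.normSq (c j) := by
          rw [← Finset.mul_sum, hnorm, mul_one]
      _ ≤ _ := Finset.sum_le_sum fun j _ =>
          mul_le_mul_of_nonneg_right (hmin.2 ⟨j, rfl⟩) (Complex.normSq_nonneg _)
  · calc _ ≤ ∑ j, lamMax * Complex.normSq (c j) := Finset.sum_le_sum fun j _ =>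
          mul_le_mul_of_nonneg_right (hmax.2 ⟨j, rfl⟩) (Complex.normSq_nonneg _)
      _ = lamMax := by rw [← Finset.mul_sum, hnorm, mul_one]



open scoped Matrix

/-- variational bound for the embedded Hamiltonian: for a Hermitian matrix `H`
indexed by `ι × κ` with smallest eigenvalue `lamMin` and largest eigenvalue `lamMax`, and a
unit environment vector `ψC`, the Rayleigh quotient of the compressed matrix
`(H_A)_{pq} = Σ_{k,l} conj(ψC k) · H_{(p,k),(q,l)} · ψC l` at any unit vector `φ` lies in
`[lamMin, lamMax]`. -/
theorem embedded_hamiltonian_rayleigh_bounds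
    {ι κ : Type*} [Fintype ι] [Fintype κ] [DecidableEq (ι × κ)]
    (H : Matrix (ι × κ) (ι × κ) ℂ) (hH : H.IsHermitian)
    (lamMin lamMax : ℝ)
    (hmin : IsLeast (Set.range hH.eigenvalues) lamMin)
    (hmax : IsGreatest (Set.range hH.eigenvalues) lamMax)
    (ψC : κ → ℂ) (hψC : ∑ k, ‖ψC k‖ ^ 2 = 1) :
    ∀ φ : ι → ℂ, (∑ i, ‖φ i‖ ^ 2 = 1) →
      lamMin ≤ (star φ ⬝ᵥ (Matrix.of fun p q : ι =>
          ∑ k, ∑ l, (starRingEnd ℂ) (ψC k) * H (p, k) (q, l) * ψC l).mulVec φ).re ∧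
      (star φ ⬝ᵥ (Matrix.of fun p q : ι =>
          ∑ k, ∑ l, (starRingEnd ℂ) (ψC k) * H (p, k) (q, l) * ψC l).mulVec φ).re ≤ lamMax := by
  intro φ hφ
  set x : ι × κ → ℂ := fun pk => φ pk.1 * ψC pk.2 with hxdef
  have h1 : (∑ p, (starRingEnd ℂ) (φ p) * φ p) = ((∑ i, ‖φ i‖ ^ 2 : ℝ) : ℂ) := by
    push_cast [Complex.sq_norm, Complex.normSq_eq_conj_mul_self]; rfl
  have h2 : (∑ k, (starRingEnd ℂ) (ψC k) * ψC k) = ((∑ k, ‖ψC k‖ ^ 2 : ℝ) : ℂ) := by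
    push_cast [Complex.sq_norm, Complex.normSq_eq_conj_mul_self]; rfl
  have hx : star x ⬝ᵥ x = 1 := by
    have hexp : star x ⬝ᵥ x =
        (∑ p, (starRingEnd ℂ) (φ p) * φ p) * (∑ k, (starRingEnd ℂ) (ψC k) * ψC k) := by
      rw [Finset.sum_mul_sum]
      simp only [dotProduct, Pi.star_apply, Complex.star_def, Fintype.sum_prod_type]
      refine Finset.sum_congr rfl fun p _ => Finset.sum_congr rfl fun k _ => ?_
      simp only [hxdef, map_mul]; ring
    rw [hexp, h1, h2, hφ, hψC]
    norm_num
  have hray : star φ ⬝ᵥ (Matrix.of fun p q : ι =>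
      ∑ k, ∑ l, (starRingEnd ℂ) (ψC k) * H (p, k) (q, l) * ψC l).mulVec φ
      = star x ⬝ᵥ H *ᵥ x := by
    simp only [dotProduct, Matrix.mulVec, Matrix.of_apply, Pi.star_apply,
      Complex.star_def, Fintype.sum_prod_type, Finset.sum_mul, Finset.mul_sum, hxdef, map_mul]
    refine Finset.sum_congr rfl fun p _ => Finset.sum_comm.trans ?_
    refine Finset.sum_congr rfl fun k _ => Finset.sum_congr rfl fun q _ =>
      Finset.sum_congr rfl fun l _ => by ring
  rw [hray]
  exact rayleigh_aux H hH lamMin lamMax hmin hmax x hx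
end
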